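/- For any orthogonal matrix R ∈ O(3) and any matrix K with singular value decomposition K = U D Vᵀ (D diagonal with nonnegative entries, U, V orthogonal), tr(Rᵀ K) ≤ tr(D), with equality attained at R = U Vᵀ. -/

import Mathlib

/-!
Write `K = U D Vᵀ`. By cyclicity of the trace, `tr(Rᵀ K) = tr(Q D)` with `Q = Vᵀ Rᵀ U` orthogonal,
and `tr(Q D) = ∑ⱼ Q_jj d_j ≤ ∑ⱼ d_j` because the entries of an orthogonal matrix are at most `1`
and the `d_j` are nonnegative. For `R = U Vᵀ` we get `Q = 1`.
-/

open Matrix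

namespace Matrix

variable {n : Type*} [Fintype n] [DecidableEq n]

theorem mem_unitaryGroup_real_iff {A : Matrix n n ℝ} : A ∈ unitaryGroup n ℝ ↔ Aᵀ * A = 1 := by
  rw [mem_unitaryGroup_iff', star_eq_conjTranspose, conjTranspose_eq_transpose_of_trivial]

theorem apply_le_one_of_mem_unitaryGroup {Q : Matrix n n ℝ} (hQ : Q ∈ unitaryGroup n ℝ)
    (i j : n) : Q i j ≤ 1 :=
  (le_abs_self _).trans (entry_norm_bound_of_unitary hQ i j)

theorem trace_mul_diagonal {α : Type*} [NonUnitalNonAssocSemiring α] (Q : Matrix n n α)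
    (d : n → α) :
    (Q * diagonal d).trace = ∑ i, Q i i * d i := by
  simp only [trace, diag, mul_diagonal]

theorem trace_mul_diagonal_le_of_mem_unitaryGroup {Q : Matrix n n ℝ}
    (hQ : Q ∈ unitaryGroup n ℝ) {d : n → ℝ} (hd : 0 ≤ d) :
    (Q * diagonal d).trace ≤ (diagonal d).trace := by
  rw [trace_mul_diagonal, trace_diagonal]
  exact Finset.sum_le_sum fun i _ =>
    mul_le_of_le_one_left (hd i) (apply_le_one_of_mem_unitaryGroup hQ i i)

theorem trace_transpose_mul_svd_le {U V R : Matrix n n ℝ} (hU : U ∈ unitaryGroup n ℝ)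
    (hV : V ∈ unitaryGroup n ℝ) (hR : R ∈ unitaryGroup n ℝ) {d : n → ℝ} (hd : 0 ≤ d) :
    (Rᵀ * (U * diagonal d * Vᵀ)).trace ≤ (diagonal d).trace := by
  have hQ : Vᵀ * Rᵀ * U ∈ unitaryGroup n ℝ := by
    have h := mul_mem (mul_mem (Unitary.star_mem hV) (Unitary.star_mem hR)) hU
    simpa only [star_eq_conjTranspose, conjTranspose_eq_transpose_of_trivial] using h
  calc (Rᵀ * (U * diagonal d * Vᵀ)).trace = (Vᵀ * Rᵀ * U * diagonal d).trace := by
        rw [← Matrix.mul_assoc, trace_mul_comm]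
        simp only [Matrix.mul_assoc]
    _ ≤ (diagonal d).trace := trace_mul_diagonal_le_of_mem_unitaryGroup hQ hd

theorem trace_transpose_mul_svd_self {α : Type*} [CommRing α] {U V : Matrix n n α}
    (hU : Uᵀ * U = 1) (hV : Vᵀ * V = 1) (D : Matrix n n α) : ((U * Vᵀ)ᵀ * (U * D * Vᵀ)).trace = D.trace := by
  rw [transpose_mul, transpose_transpose,
    show V * Uᵀ * (U * D * Vᵀ) = V * (Uᵀ * U) * D * Vᵀ by simp only [Matrix.mul_assoc],
    hU, Matrix.mul_one, trace_mul_comm, ← Matrix.mul_assoc, hV, Matrix.one_mul]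

end Matrix

/-- SVD step of the orthogonal Procrustes problem: for `K = U D Vᵀ`,
`tr(Rᵀ K) ≤ tr D` for all orthogonal `R`, with equality at `R = U Vᵀ`. -/
theorem procrustes_svd_optimal
    (U V D K : Matrix (Fin 3) (Fin 3) ℝ)
    (hU : U.transpose * U = 1) (hV : V.transpose * V = 1)
    (d : Fin 3 → ℝ) (hd : ∀ j, 0 ≤ d j) (hD : D = Matrix.diagonal d)
    (hK : K = U * D * V.transpose) :
    (∀ R : Matrix (Fin 3) (Fin 3) ℝ, R.transpose * R = 1 →
      (R.transpose * K).trace ≤ D.trace) ∧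
    ((U * V.transpose).transpose * K).trace = D.trace := by
  subst hK
  refine ⟨fun R hR => ?_, trace_transpose_mul_svd_self hU hV D⟩
  subst hD
  exact trace_transpose_mul_svd_le (mem_unitaryGroup_real_iff.2 hU)
    (mem_unitaryGroup_real_iff.2 hV) (mem_unitaryGroup_real_iff.2 hR) hd
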